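/- Fix σ > 0 and μ ∈ ℝ, and for each k > 2 let F_k(x) = (1/2)·(1 − ((x − μ)/σ)·√(2/((k − 1)(k − 2))))^{−k} for x ≤ μ and F_k(x) = 1 − (1/2)·(1 + ((x − μ)/σ)·√(2/((k − 1)(k − 2))))^{−k} for x > μ. Then for every x ∈ ℝ, lim_{k→∞} F_k(x) = F(x), where F(x) = (1/2)·exp((x − μ)·√2/σ) for x ≤ μ and F(x) = 1 − (1/2)·exp(−(x − μ)·√2/σ) for x > μ (the cumulative distribution function of the Laplace distribution with mean μ and variance σ²). -/

import Mathlib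

open MeasureTheory Real Filter

/-- The cdf of the SP-distribution with parameters `k`, `μ`, `σ`. -/
noncomputable def spCdf (k σ μ x : ℝ) : ℝ :=
  if x ≤ μ then 1 / 2 * (1 - (x - μ) / σ * Real.sqrt (2 / ((k - 1) * (k - 2)))) ^ (-k)
  else 1 - 1 / 2 * (1 + (x - μ) / σ * Real.sqrt (2 / ((k - 1) * (k - 2)))) ^ (-k)

/-- The cdf of the Laplace distribution with mean `μ` and variance `σ²`. -/
noncomputable def laplaceCdf (σ μ x : ℝ) : ℝ :=
  if x ≤ μ then 1 / 2 * Real.exp ((x - μ) * Real.sqrt 2 / σ)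
  else 1 - 1 / 2 * Real.exp (-((x - μ) * Real.sqrt 2 / σ))

/-!
Writing `s k = √(2 / ((k - 1)(k - 2)))`, both branches of `spCdf` are affine images of
`(1 + t s k) ^ (-k) = exp (-(k s k) · log (1 + t s k) / s k)`. Since `s k → 0` and `k s k → √2`,
and `log (1 + t v) / v → t` as `v → 0`, this tends to `exp (-(√2 t))`, which is the corresponding
branch of `laplaceCdf` with `t = ± (x - μ) / σ`.
-/

open Topology

lemma tendsto_log_one_add_mul_div_self (t : ℝ) :
    Tendsto (fun v : ℝ => log (1 + t * v) / v) (𝓝[≠] 0) (𝓝 t) := by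
  have hderiv : HasDerivAt (fun v : ℝ => log (1 + t * v)) t 0 := by
    simpa using (((hasDerivAt_id (0 : ℝ)).const_mul t).const_add 1).log (by norm_num)
  refine (hasDerivAt_iff_tendsto_slope_zero.mp hderiv).congr fun v => ?_
  simp [div_eq_inv_mul]

lemma tendsto_one_add_mul_rpow_neg {α : Type*} {l : Filter α} {k s : α → ℝ} {c : ℝ} (t : ℝ)
    (hs : Tendsto s l (𝓝[≠] 0)) (hks : Tendsto (fun a => k a * s a) l (𝓝 c)) :
    Tendsto (fun a => (1 + t * s a) ^ (-k a)) l (𝓝 (exp (-(c * t)))) := by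
  have hlog : Tendsto (fun a => -(k a * s a * (log (1 + t * s a) / s a))) l (𝓝 (-(c * t))) :=
    (hks.mul ((tendsto_log_one_add_mul_div_self t).comp hs)).neg
  have hbase : Tendsto (fun a => 1 + t * s a) l (𝓝 1) := by
    simpa using ((tendsto_nhdsWithin_iff.mp hs).1.const_mul t).const_add 1
  refine ((continuous_exp.tendsto _).comp hlog).congr' ?_
  filter_upwards [hbase.eventually (lt_mem_nhds one_pos), tendsto_nhdsWithin_iff.mp hs |>.2]
    with a hpos hne
  simp only [Function.comp, rpow_def_of_pos hpos, Set.mem_compl_singleton_iff] at hne ⊢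
  field_simp

lemma tendsto_mul_sqrt_two_div_mul_sub_one_sub_two :
    Tendsto (fun k : ℝ => k * √(2 / ((k - 1) * (k - 2)))) atTop (𝓝 √2) := by
  have hcont : ContinuousAt (fun y : ℝ => √(2 / ((1 - y) * (1 - 2 * y)))) 0 := by
    fun_prop (disch := norm_num)
  have hlim : Tendsto (fun y : ℝ => √(2 / ((1 - y) * (1 - 2 * y)))) (𝓝 0) (𝓝 √2) := by
    simpa only [mul_zero, sub_zero, mul_one, div_one] using hcont.tendsto
  refine (hlim.comp tendsto_inv_atTop_zero).congr' ?_
  filter_upwards [eventually_gt_atTop (2 : ℝ)] with k hk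
  have hk1 : k - 1 ≠ 0 := by linarith
  have hk2 : k - 2 ≠ 0 := by linarith
  have hscale : 2 / ((1 - k⁻¹) * (1 - 2 * k⁻¹)) = k ^ 2 * (2 / ((k - 1) * (k - 2))) := by
    field_simp
  rw [Function.comp, hscale, sqrt_mul (by positivity), sqrt_sq (by linarith)]

lemma tendsto_sqrt_two_div_mul_sub_one_sub_two :
    Tendsto (fun k : ℝ => √(2 / ((k - 1) * (k - 2)))) atTop (𝓝[≠] 0) := by
  have hlim : Tendsto (fun k : ℝ => k * √(2 / ((k - 1) * (k - 2))) * k⁻¹) atTop (𝓝 0) := by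
    simpa using tendsto_mul_sqrt_two_div_mul_sub_one_sub_two.mul tendsto_inv_atTop_zero
  refine tendsto_nhdsWithin_iff.mpr ⟨hlim.congr' ?_, ?_⟩ <;>
    filter_upwards [eventually_gt_atTop (2 : ℝ)] with k hk
  · field_simp
  · have : 0 < 2 / ((k - 1) * (k - 2)) := div_pos two_pos (by nlinarith)
    exact (sqrt_pos.mpr this).ne'

lemma tendsto_one_add_mul_sqrt_two_div_rpow_neg (t : ℝ) :
    Tendsto (fun k : ℝ => (1 + t * √(2 / ((k - 1) * (k - 2)))) ^ (-k)) atTop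
      (𝓝 (exp (-(√2 * t)))) :=
  tendsto_one_add_mul_rpow_neg t tendsto_sqrt_two_div_mul_sub_one_sub_two
    tendsto_mul_sqrt_two_div_mul_sub_one_sub_two

theorem spCdf_tendsto_laplaceCdf_general (σ μ : ℝ) (x : ℝ) :
    Tendsto (fun k : ℝ => spCdf k σ μ x) atTop (nhds (laplaceCdf σ μ x)) := by
  by_cases hx : x ≤ μ
  · simp only [spCdf, laplaceCdf, if_pos hx]
    have h := (tendsto_one_add_mul_sqrt_two_div_rpow_neg (-((x - μ) / σ))).const_mul (1 / 2)
    simp only [neg_mul, ← sub_eq_add_neg] at h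
    convert h using 4
    ring
  · simp only [spCdf, laplaceCdf, if_neg hx]
    have h :=
      ((tendsto_one_add_mul_sqrt_two_div_rpow_neg ((x - μ) / σ)).const_mul (1 / 2)).const_sub 1
    convert h using 5
    ring

/-- As `k → ∞`, the SP-distribution cdf converges pointwise to the Laplace cdf. -/
theorem spCdf_tendsto_laplaceCdf (σ μ : ℝ) (hσ : 0 < σ) (x : ℝ) :
    Tendsto (fun k : ℝ => spCdf k σ μ x) atTop (nhds (laplaceCdf σ μ x)) :=
  spCdf_tendsto_laplaceCdf_general σ μ x
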